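/- arXiv:1607.03655 — 2 statements merged into one kernel-verified Lean document; each statement's English description precedes it below -/
import Mathlib

section
/- There exists a family (e_t)_{t ∈ ℝ} of bijections ℕ → ℚ such that for all distinct s, t ∈ ℝ, the linearly ordered sets C_{e_s} and C_{e_t} are not order-isomorphic. In particular, there are 2^ℵ0 pairwise non-order-isomorphic ordered sets of the form C_e. -/
/-- The underlying set of `C_e`: pairs `(n, i)` with `i ≤ n`. -/
def CElt : Type := {p : ℕ × ℕ // p.2 ≤ p.1}

/-- The linear order on `C_e` determined by an enumeration `e : ℕ → ℚ`:
`(m, i) ≤ (n, j)` iff `e m < e n`, or `m = n` and `i ≤ j`. -/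
def Cle (e : ℕ → ℚ) (p q : CElt) : Prop :=
  e p.val.1 < e q.val.1 ∨ (p.val.1 = q.val.1 ∧ p.val.2 ≤ q.val.2)

/-!
Since `e` maps onto the dense order `ℚ`, the only covering pairs of `C_e` are
`(n, i) ⋖ (n, i + 1)`. Hence the blocks `{n} × [0, n]` are exactly the maximal chains of covers,
and an order isomorphism `C_e ≃ C_{e'}` maps each block onto the block of the same size, i.e. it
is the identity on the underlying set. So `C_e ≅ C_{e'}` forces `e` and `e'` to induce the same
order on `ℕ`. A continuum of enumerations inducing pairwise different orders is obtained from a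
fixed one by swapping its values at `2n` and `2n + 1` for `n` ranging over a set `A ⊆ ℕ`.
-/

open Function

section CoveringRelation

variable {α β : Type*} {r : α → α → Prop} {s : β → β → Prop}

def StrictRel (r : α → α → Prop) (a b : α) : Prop :=
  r a b ∧ ¬ r b a

def RelCovBy (r : α → α → Prop) (a b : α) : Prop :=
  StrictRel r a b ∧ ∀ c, ¬ (StrictRel r a c ∧ StrictRel r c b)

theorem RelIso.strictRel_iff (φ : r ≃r s) {a b : α} :
    StrictRel s (φ a) (φ b) ↔ StrictRel r a b := by
  simp only [StrictRel, φ.map_rel_iff]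

theorem RelIso.relCovBy_iff (φ : r ≃r s) {a b : α} :
    RelCovBy s (φ a) (φ b) ↔ RelCovBy r a b := by
  unfold RelCovBy
  rw [φ.strictRel_iff, ← φ.toEquiv.forall_congr_right]
  simp only [RelIso.coe_fn_toEquiv, φ.strictRel_iff]

theorem RelIso.exists_relCovBy_left_iff (φ : r ≃r s) {a : α} :
    (∃ b, RelCovBy s (φ a) b) ↔ ∃ b, RelCovBy r a b :=
  φ.surjective.exists.trans (exists_congr fun _ => φ.relCovBy_iff)

theorem RelIso.exists_relCovBy_right_iff (φ : r ≃r s) {b : α} :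
    (∃ a, RelCovBy s a (φ b)) ↔ ∃ a, RelCovBy r a b :=
  φ.surjective.exists.trans (exists_congr fun _ => φ.relCovBy_iff)

end CoveringRelation

section Rigidity

variable {e e' : ℕ → ℚ}

theorem strictRel_cle_iff {p q : CElt} :
    StrictRel (Cle e) p q ↔ e p.1.1 < e q.1.1 ∨ p.1.1 = q.1.1 ∧ p.1.2 < q.1.2 := by
  unfold StrictRel Cle
  grind

theorem relCovBy_cle_iff (he : Surjective e) {p q : CElt} :
    RelCovBy (Cle e) p q ↔ p.1.1 = q.1.1 ∧ q.1.2 = p.1.2 + 1 := by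
  simp only [RelCovBy, strictRel_cle_iff]
  constructor
  · rintro ⟨hlt | ⟨hfst, hsnd⟩, hnone⟩
    · obtain ⟨x, hpx, hxq⟩ := exists_between hlt
      obtain ⟨k, rfl⟩ := he x
      exact (hnone ⟨(k, 0), k.zero_le⟩ ⟨.inl hpx, .inl hxq⟩).elim
    · refine ⟨hfst, le_antisymm ?_ hsnd⟩
      by_contra! hgap
      exact hnone ⟨(p.1.1, p.1.2 + 1), by have := q.2; omega⟩
        ⟨.inr ⟨rfl, Nat.lt_succ_self _⟩, .inr ⟨hfst, hgap⟩⟩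
  · rintro ⟨hfst, hsnd⟩
    refine ⟨.inr ⟨hfst, by omega⟩, fun c ⟨hpc, hcq⟩ => ?_⟩
    rw [hfst] at hpc
    rcases hpc with hpc | ⟨hpc, _⟩ <;> rcases hcq with hcq | ⟨hcq, _⟩
    · exact lt_asymm hpc hcq
    · exact (hcq ▸ hpc).false
    · exact (hpc ▸ hcq).false
    · omega

theorem exists_relCovBy_cle_left_iff (he : Surjective e) {p : CElt} :
    (∃ q, RelCovBy (Cle e) p q) ↔ p.1.2 < p.1.1 := by
  simp only [relCovBy_cle_iff he]
  exact ⟨fun ⟨q, _, _⟩ => by have := q.2; omega,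
    fun h => ⟨⟨(p.1.1, p.1.2 + 1), h⟩, rfl, rfl⟩⟩

theorem exists_relCovBy_cle_right_iff (he : Surjective e) {q : CElt} :
    (∃ p, RelCovBy (Cle e) p q) ↔ 0 < q.1.2 := by
  simp only [relCovBy_cle_iff he]
  exact ⟨fun ⟨p, _, _⟩ => by omega,
    fun h => ⟨⟨(q.1.1, q.1.2 - 1), by have := q.2; omega⟩, rfl, by dsimp only; omega⟩⟩

theorem RelIso.cle_apply_eq (he : Surjective e) (he' : Surjective e') (φ : Cle e ≃r Cle e')
    (p : CElt) : φ p = p := by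
  obtain ⟨⟨n, i⟩, hi⟩ := p
  set m := (φ ⟨(n, 0), n.zero_le⟩).1.1
  have hblock : ∀ i (hi : i ≤ n), (φ ⟨(n, i), hi⟩).1 = (m, i) := by
    intro i
    induction i with
    | zero =>
      intro _
      have hbot := φ.exists_relCovBy_right_iff.not.2
        ((exists_relCovBy_cle_right_iff he (q := ⟨(n, 0), n.zero_le⟩)).not.2 (lt_irrefl 0))
      rw [exists_relCovBy_cle_right_iff he'] at hbot
      exact Prod.ext rfl (by omega)
    | succ i ih =>
      intro hi
      have hcov := φ.relCovBy_iff.2 ((relCovBy_cle_iff he).2 ⟨rfl, rfl⟩ :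
        RelCovBy (Cle e) ⟨(n, i), by omega⟩ ⟨(n, i + 1), hi⟩)
      rw [relCovBy_cle_iff he', ih] at hcov
      exact Prod.ext hcov.1.symm hcov.2
  have hm : m = n := by
    have htop := φ.exists_relCovBy_left_iff.not.2
      ((exists_relCovBy_cle_left_iff he (p := ⟨(n, n), le_rfl⟩)).not.2 (lt_irrefl n))
    rw [exists_relCovBy_cle_left_iff he', hblock n le_rfl] at htop
    have hle : n ≤ m := by simpa only [hblock n le_rfl] using (φ ⟨(n, n), le_rfl⟩).2
    exact le_antisymm (not_lt.1 htop) hle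
  exact Subtype.ext ((hblock i hi).trans (by rw [hm]))

theorem RelIso.lt_iff_lt_of_cle (he : Surjective e) (he' : Surjective e') (φ : Cle e ≃r Cle e')
    {m n : ℕ} (hmn : m ≠ n) : e m < e n ↔ e' m < e' n := by
  have hiff := φ.map_rel_iff (a := ⟨(m, 0), m.zero_le⟩) (b := ⟨(n, 0), n.zero_le⟩)
  rw [φ.cle_apply_eq he he' ⟨(m, 0), m.zero_le⟩, φ.cle_apply_eq he he' ⟨(n, 0), n.zero_le⟩]
    at hiff
  simpa [Cle, hmn] using hiff.symm

end Rigidity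

section Enumerations

variable {β : Type*}

open Classical in
noncomputable def flipEnum (q : Bool × ℕ ≃ β) (A : Set ℕ) : ℕ ≃ β :=
  Equiv.boolProdNatEquivNat.symm.trans <|
    (Equiv.prodCongrLeft fun n => if n ∈ A then Equiv.boolNot else Equiv.refl Bool).trans q

theorem flipEnum_lt_iff [LinearOrder β] (q : Bool × ℕ ≃ β) (A : Set ℕ) (n : ℕ) :
    flipEnum q A (2 * n) < flipEnum q A (2 * n + 1) ↔ (n ∈ A ↔ q (true, n) < q (false, n)) := by
  have hne : q (false, n) ≠ q (true, n) := q.injective.ne (by simp)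
  by_cases hn : n ∈ A
  · simp [flipEnum, hn]
  · simp [flipEnum, hn, hne.le_iff_lt]

end Enumerations

/-- there is a real-indexed family of enumerations of ℚ whose
associated ordered sets `C_e` are pairwise non-order-isomorphic. -/
theorem stmt_7 :
    ∃ E : ℝ → (ℕ → ℚ),
      (∀ t : ℝ, Function.Bijective (E t)) ∧
      (∀ s t : ℝ, s ≠ t → IsEmpty (Cle (E s) ≃r Cle (E t))) := by
  obtain ⟨f⟩ : Nonempty (ℝ ≃ Set ℕ) :=
    Cardinal.eq.1 (Cardinal.mk_real.trans Cardinal.mk_set_nat.symm)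
  let q := Equiv.boolProdNatEquivNat.trans (Denumerable.equiv₂ ℕ ℚ)
  refine ⟨fun t => flipEnum q (f t), fun t => (flipEnum q (f t)).bijective,
    fun s t hst => ⟨fun φ => ?_⟩⟩
  obtain ⟨n, hn⟩ : ∃ n, ¬ (n ∈ f s ↔ n ∈ f t) := by
    by_contra! h
    exact hst (f.injective (Set.ext h))
  have key := φ.lt_iff_lt_of_cle (flipEnum q (f s)).surjective (flipEnum q (f t)).surjective
    (m := 2 * n) (n := 2 * n + 1) (by omega)
  rw [flipEnum_lt_iff, flipEnum_lt_iff] at key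
  exact hn (by tauto)
end

section
/- There exists a family (f_t)_{t ∈ ℝ} of non-regular order-preserving maps ℚ → ℚ such that for distinct s, t ∈ ℝ, the images of f_s and f_t are not order-isomorphic; hence f_s and f_t are not 𝒟-related, and End(ℚ,≤) contains 2^ℵ0 non-regular 𝒟-classes. -/
/-!
On the negative rationals each map is `x ↦ x - 1` below the irrational `-√2` and the identity
above it, so its image has the gap `(-1 - √2, -√2)`; a monotone `g` with `f ∘ g ∘ f = f` would have
to send a rational in that gap to `-√2`, so no map of the family is regular. On `[n, n + 1)` the
map collapses onto one or two isolated points followed by a dense interval, the number of isolated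
points recording the bit `d n`. In the image, the first isolated points of the blocks (those with
an immediate successor but no immediate predecessor) are exactly the naturals, in order type `ω`,
so an order isomorphism between two images fixes each of them and therefore preserves the bits.
`𝒟`-related maps have order-isomorphic images, and distinct reals have distinct Dedekind cuts,
hence distinct bit sequences.
-/

/-- f is ℒ-related to g in End(ℚ,≤). -/
def LRel (f g : ℚ → ℚ) : Prop :=
  ∃ u v : ℚ → ℚ, Monotone u ∧ Monotone v ∧ g = f ∘ u ∧ f = g ∘ v

/-- f is ℛ-related to g in End(ℚ,≤). -/
def RRel (f g : ℚ → ℚ) : Prop :=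
  ∃ u v : ℚ → ℚ, Monotone u ∧ Monotone v ∧ g = u ∘ f ∧ f = v ∘ g

/-- f is 𝒟-related to g in End(ℚ,≤). -/
def DRel (f g : ℚ → ℚ) : Prop :=
  ∃ h : ℚ → ℚ, Monotone h ∧ LRel f h ∧ RRel h g

open Set

section CoverChains

variable {α β : Type*} [LinearOrder α] [LinearOrder β]

def IsCoverChainStart (x : α) : Prop := (∃ y, x ⋖ y) ∧ ∀ y, ¬ y ⋖ x

def HasTwoStepCoverChain (x : α) : Prop := ∃ a b, x ⋖ a ∧ a ⋖ b

theorem OrderIso.isCoverChainStart_apply_iff (φ : α ≃o β) {x : α} :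
    IsCoverChainStart (φ x) ↔ IsCoverChainStart x := by
  simp only [IsCoverChainStart, φ.surjective.exists, φ.surjective.forall, apply_covBy_apply_iff]

theorem OrderIso.hasTwoStepCoverChain_apply_iff (φ : α ≃o β) {x : α} :
    HasTwoStepCoverChain (φ x) ↔ HasTwoStepCoverChain x := by
  simp only [HasTwoStepCoverChain, φ.surjective.exists, apply_covBy_apply_iff]

theorem OrderIso.apply_eq_of_strictMono_of_range {a : ℕ → α} {b : ℕ → β} (φ : α ≃o β)
    (ha : StrictMono a) (hb : StrictMono b) (hφ : ∀ x, φ x ∈ range b ↔ x ∈ range a) (n : ℕ) :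
    φ (a n) = b n := by
  choose ψ hψ using fun n => (hφ (a n)).2 (mem_range_self n)
  choose χ hχ using fun n => (hφ (φ.symm (b n))).1 (by simp)
  have hψ_mono : StrictMono ψ := fun m k hmk =>
    hb.lt_iff_lt.1 (by rw [hψ, hψ]; exact φ.strictMono (ha hmk))
  have hχ_mono : StrictMono χ := fun m k hmk =>
    ha.lt_iff_lt.1 (by rw [hχ, hχ]; exact φ.symm.strictMono (hb hmk))
  have hχψ : χ (ψ n) = n := ha.injective (by rw [hχ, hψ, φ.symm_apply_apply])
  have hψn : ψ n = n := le_antisymm ((hχ_mono.id_le (ψ n)).trans_eq hχψ) (hψ_mono.id_le n)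
  rw [← hψ, hψn]

variable {s : Set α}

theorem Subtype.covBy_of_forall_le {x y : s} (hxy : (x : α) < y)
    (h : ∀ z ∈ s, (x : α) < z → (y : α) ≤ z) : x ⋖ y :=
  ⟨hxy, fun z hxz hzy => (h z z.2 hxz).not_gt hzy⟩

variable [DenselyOrdered α]

theorem Subtype.not_covBy_of_Ico_subset {x : s} {b : α} (hxb : (x : α) < b)
    (hs : Ico (x : α) b ⊆ s) (y : s) : ¬ x ⋖ y := by
  intro hxy
  obtain ⟨z, hxz, hz⟩ := exists_between (lt_min (Subtype.coe_lt_coe.2 hxy.lt) hxb)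
  exact hxy.2 (c := ⟨z, hs ⟨hxz.le, hz.trans_le (min_le_right _ _)⟩⟩) hxz
    (hz.trans_le (min_le_left _ _))

theorem Subtype.not_covBy_of_Ioo_subset {x : s} {a : α} (hax : a < x)
    (hs : Ioo a (x : α) ⊆ s) (y : s) : ¬ y ⋖ x := by
  intro hyx
  obtain ⟨z, hz, hzx⟩ := exists_between (max_lt (Subtype.coe_lt_coe.2 hyx.lt) hax)
  exact hyx.2 (c := ⟨z, hs ⟨(le_max_right _ _).trans_lt hz, hzx⟩⟩)
    ((le_max_left (y : α) a).trans_lt hz) hzx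

end CoverChains

def IsRegularEnd (f : ℚ → ℚ) : Prop := ∃ g : ℚ → ℚ, Monotone g ∧ f ∘ g ∘ f = f

theorem not_isRegularEnd_of_irrational_gap {f : ℚ → ℚ} {r : ℝ} (hr : Irrational r) {a b q : ℚ}
    (har : (a : ℝ) < r) (hrb : r < b) (hf : ∀ x z, a < x → x < b → f z = f x → z = x)
    (hlo : ∀ x : ℚ, (x : ℝ) < r → f x ≤ q) (hhi : ∀ x : ℚ, r < x → q ≤ f x) :
    ¬ IsRegularEnd f := by
  rintro ⟨g, hg, hfgf⟩
  have hgf : ∀ x, a < x → x < b → g (f x) = x := fun x h1 h2 => hf x _ h1 h2 (congrFun hfgf x)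
  rcases lt_or_gt_of_ne (hr.ne_rat (g q)).symm with hlt | hgt
  · obtain ⟨x, hx, hxr⟩ := exists_rat_btwn (max_lt hlt har)
    rw [max_lt_iff, Rat.cast_lt, Rat.cast_lt] at hx
    have : x ≤ g q := hgf x hx.2 (by exact_mod_cast hxr.trans hrb) ▸ hg (hlo x hxr)
    exact this.not_gt hx.1
  · obtain ⟨x, hrx, hx⟩ := exists_rat_btwn (lt_min hgt hrb)
    rw [lt_min_iff, Rat.cast_lt, Rat.cast_lt] at hx
    have : g q ≤ x := hgf x (by exact_mod_cast har.trans hrx) hx.2 ▸ hg (hhi x hrx)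
    exact this.not_gt hx.1

theorem eq_of_natCast_lt_add_one {m n : ℕ} (h₁ : (m : ℚ) < n + 1) (h₂ : (n : ℚ) < m + 1) :
    m = n := by
  have : m < n + 1 := by exact_mod_cast h₁
  have : n < m + 1 := by exact_mod_cast h₂
  omega

def blockShape (b : Bool) (u : ℚ) : ℚ :=
  if u < 1 / 2 then 0 else if u < 3 / 4 then (if b then 1 / 2 else 0) else u

theorem blockShape_mono (b : Bool) : Monotone (blockShape b) := by
  intro u v huv
  unfold blockShape
  split_ifs <;> linarith

theorem blockShape_nonneg (b : Bool) (u : ℚ) : 0 ≤ blockShape b u := by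
  unfold blockShape
  split_ifs <;> linarith

theorem blockShape_lt_one (b : Bool) {u : ℚ} (hu : u < 1) : blockShape b u < 1 := by
  unfold blockShape
  split_ifs <;> linarith

theorem blockShape_of_three_quarters_le (b : Bool) {u : ℚ} (hu : 3 / 4 ≤ u) :
    blockShape b u = u := by
  rw [blockShape, if_neg (not_lt.2 (by linarith)), if_neg (not_lt.2 hu)]

theorem blockShape_cases (b : Bool) (u : ℚ) :
    blockShape b u = 0 ∨ (b = true ∧ blockShape b u = 1 / 2) ∨
      (3 / 4 ≤ u ∧ blockShape b u = u) := by
  unfold blockShape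
  split_ifs with h₁ h₂ hb <;> simp_all

/-- On `[n, n + 1)` the image is `{n} ∪ {n + 1/2 | d n} ∪ [n + 3/4, n + 1)`; on the negative
rationals it is `(-∞, -1 - √2) ∪ (-√2, 0)`. -/
noncomputable def codedMap (d : ℕ → Bool) (x : ℚ) : ℚ :=
  if x < 0 then (if (x : ℝ) < -√2 then x - 1 else x)
  else ⌊x⌋₊ + blockShape (d ⌊x⌋₊) (x - ⌊x⌋₊)

section CodedMap

variable {d : ℕ → Bool}

theorem codedMap_of_lt_neg_sqrt_two {x : ℚ} (hx : (x : ℝ) < -√2) : codedMap d x = x - 1 := by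
  have hx0 : x < 0 := by
    have := Real.one_lt_sqrt_two
    exact_mod_cast (by linarith : (x : ℝ) < 0)
  simp [codedMap, hx0, hx]

theorem codedMap_of_neg_sqrt_two_le {x : ℚ} (h₁ : -√2 ≤ (x : ℝ)) (h₂ : x < 0) :
    codedMap d x = x := by
  simp [codedMap, h₂, h₁.not_gt]

theorem codedMap_natCast_add (n : ℕ) {u : ℚ} (hu₀ : 0 ≤ u) (hu₁ : u < 1) :
    codedMap d (n + u) = n + blockShape (d n) u := by
  have hfloor : ⌊(n : ℚ) + u⌋₊ = n := (Nat.floor_eq_iff (by positivity)).2 ⟨by linarith, by linarith⟩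
  simp [codedMap, hfloor, (by positivity : (0 : ℚ) ≤ n + u).not_gt]

theorem exists_natCast_add {x : ℚ} (hx : 0 ≤ x) : ∃ (n : ℕ) (u : ℚ), 0 ≤ u ∧ u < 1 ∧ x = n + u :=
  ⟨⌊x⌋₊, x - ⌊x⌋₊, by linarith [Nat.floor_le hx], by linarith [Nat.lt_floor_add_one x], by ring⟩

theorem codedMap_neg {x : ℚ} (hx : x < 0) : codedMap d x < 0 := by
  unfold codedMap
  split_ifs <;> linarith

theorem codedMap_nonneg {x : ℚ} (hx : 0 ≤ x) : 0 ≤ codedMap d x := by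
  obtain ⟨n, u, hu₀, hu₁, rfl⟩ := exists_natCast_add hx
  rw [codedMap_natCast_add n hu₀ hu₁]
  linarith [blockShape_nonneg (d n) u, (Nat.cast_nonneg n : (0 : ℚ) ≤ n)]

theorem codedMap_strictMonoOn : StrictMonoOn (codedMap d) (Iio 0) := by
  intro x hx y hy hxy
  have hxy' : (x : ℝ) < y := by exact_mod_cast hxy
  rcases lt_or_ge (y : ℝ) (-√2) with hy₂ | hy₂
  · rw [codedMap_of_lt_neg_sqrt_two hy₂, codedMap_of_lt_neg_sqrt_two (hxy'.trans hy₂)]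
    linarith
  · rw [codedMap_of_neg_sqrt_two_le hy₂ hy]
    rcases lt_or_ge (x : ℝ) (-√2) with hx₂ | hx₂
    · rw [codedMap_of_lt_neg_sqrt_two hx₂]; linarith
    · rwa [codedMap_of_neg_sqrt_two_le hx₂ hx]

theorem codedMap_monotone (d : ℕ → Bool) : Monotone (codedMap d) := by
  intro x y hxy
  rcases lt_or_ge y 0 with hy | hy
  · exact codedMap_strictMonoOn.monotoneOn (hxy.trans_lt hy) hy hxy
  rcases lt_or_ge x 0 with hx | hx
  · exact (codedMap_neg hx).le.trans (codedMap_nonneg hy)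
  obtain ⟨m, u, hu₀, hu₁, rfl⟩ := exists_natCast_add hx
  obtain ⟨n, v, hv₀, hv₁, rfl⟩ := exists_natCast_add hy
  rw [codedMap_natCast_add m hu₀ hu₁, codedMap_natCast_add n hv₀ hv₁]
  rcases lt_trichotomy m n with hmn | rfl | hmn
  · have : (m : ℚ) + 1 ≤ n := by exact_mod_cast hmn
    linarith [blockShape_lt_one (d m) hu₁, blockShape_nonneg (d n) v]
  · exact add_le_add_right (blockShape_mono _ (by linarith)) _
  · have : (n : ℚ) + 1 ≤ m := by exact_mod_cast hmn
    linarith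

theorem codedMap_not_isRegularEnd (d : ℕ → Bool) : ¬ IsRegularEnd (codedMap d) := by
  have h₁ := Real.one_lt_sqrt_two
  have h₂ := Real.sqrt_two_lt_three_halves
  refine not_isRegularEnd_of_irrational_gap (r := -√2) (a := -2) (b := 0) (q := -2)
    irrational_sqrt_two.neg (by push_cast; linarith) (by push_cast; linarith) ?_ ?_ ?_
  · intro x z _ hx hzx
    have hz : z < 0 := by
      by_contra! hz
      exact (codedMap_neg (d := d) hx).not_ge (hzx ▸ codedMap_nonneg hz)
    exact codedMap_strictMonoOn.injOn hz hx hzx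
  · intro x hx
    rw [codedMap_of_lt_neg_sqrt_two hx]
    have : x < -1 := by exact_mod_cast (by linarith : (x : ℝ) < -1)
    linarith
  · intro x hx
    rcases lt_or_ge x 0 with hx₀ | hx₀
    · rw [codedMap_of_neg_sqrt_two_le hx.le hx₀]
      exact_mod_cast (by linarith : (-2 : ℝ) ≤ x)
    · linarith [codedMap_nonneg (d := d) hx₀]

theorem natCast_mem_range_codedMap (n : ℕ) : (n : ℚ) ∈ range (codedMap d) :=
  ⟨n, by simpa [blockShape] using codedMap_natCast_add (d := d) n le_rfl one_pos⟩

theorem natCast_add_half_mem_range_codedMap {n : ℕ} (h : d n = true) :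
    (n + 1 / 2 : ℚ) ∈ range (codedMap d) :=
  ⟨n + 1 / 2, by rw [codedMap_natCast_add n (by norm_num) (by norm_num)]; norm_num [blockShape, h]⟩

theorem Ico_subset_range_codedMap (n : ℕ) : Ico (n + 3 / 4 : ℚ) (n + 1) ⊆ range (codedMap d) := by
  rintro x ⟨h₁, h₂⟩
  refine ⟨x, ?_⟩
  have := codedMap_natCast_add (d := d) n (u := x - n) (by linarith) (by linarith)
  rwa [add_sub_cancel, blockShape_of_three_quarters_le _ (by linarith), add_sub_cancel] at this

theorem natCast_add_three_quarters_mem_range_codedMap (n : ℕ) :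
    (n + 3 / 4 : ℚ) ∈ range (codedMap d) :=
  Ico_subset_range_codedMap n ⟨le_rfl, by linarith⟩

theorem Ioo_subset_range_codedMap (n : ℕ) : Ioo (n - 1 / 4 : ℚ) n ⊆ range (codedMap d) := by
  rintro x ⟨h₁, h₂⟩
  cases n with
  | zero =>
    simp only [Nat.cast_zero, zero_sub] at h₁ h₂
    have h₁' : (-1 : ℝ) < x := by exact_mod_cast (by linarith : (-1 : ℚ) < x)
    refine ⟨x, codedMap_of_neg_sqrt_two_le ?_ h₂⟩
    linarith [Real.one_lt_sqrt_two]
  | succ k =>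
    push_cast at h₁ h₂
    exact Ico_subset_range_codedMap k ⟨by linarith, by linarith⟩

theorem eq_add_half_of_mem_range_codedMap {n : ℕ} {q : ℚ} (hq : q ∈ range (codedMap d))
    (h₁ : (n : ℚ) < q) (h₂ : q < n + 3 / 4) : d n = true ∧ q = n + 1 / 2 := by
  obtain ⟨z, rfl⟩ := hq
  rcases lt_or_ge z 0 with hz | hz
  · linarith [codedMap_neg (d := d) hz, (Nat.cast_nonneg n : (0 : ℚ) ≤ n)]
  obtain ⟨m, u, hu₀, hu₁, rfl⟩ := exists_natCast_add hz
  rw [codedMap_natCast_add m hu₀ hu₁] at h₁ h₂ ⊢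
  have := blockShape_lt_one (d m) hu₁
  have := blockShape_nonneg (d m) u
  obtain rfl : m = n := eq_of_natCast_lt_add_one (by linarith) (by linarith)
  rcases blockShape_cases (d m) u with h | ⟨hb, h⟩ | ⟨hu, h⟩ <;> rw [h] at h₁ h₂ ⊢
  · linarith
  · exact ⟨hb, rfl⟩
  · linarith

theorem mem_range_codedMap_cases {q : ℚ} (hq : q ∈ range (codedMap d)) :
    (∃ b, q < b ∧ Ico q b ⊆ range (codedMap d)) ∨ (∃ n : ℕ, q = n) ∨
      ∃ n : ℕ, d n = true ∧ q = n + 1 / 2 := by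
  obtain ⟨z, rfl⟩ := hq
  rcases lt_or_ge z 0 with hz | hz
  · left
    rcases lt_or_ge (z : ℝ) (-√2) with hr | hr
    · obtain ⟨c, hzc, hc⟩ := exists_rat_btwn hr
      have hzc' : z < c := by exact_mod_cast hzc
      rw [codedMap_of_lt_neg_sqrt_two hr]
      refine ⟨c - 1, by linarith, fun t ht => ⟨t + 1, ?_⟩⟩
      have : ((t + 1 : ℚ) : ℝ) < c := by exact_mod_cast (by linarith [ht.2] : t + 1 < c)
      rw [codedMap_of_lt_neg_sqrt_two (this.trans hc), add_sub_cancel_right]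
    · rw [codedMap_of_neg_sqrt_two_le hr hz]
      exact ⟨0, hz, fun t ht =>
        ⟨t, codedMap_of_neg_sqrt_two_le (hr.trans (by exact_mod_cast ht.1)) ht.2⟩⟩
  · obtain ⟨m, u, hu₀, hu₁, rfl⟩ := exists_natCast_add hz
    rw [codedMap_natCast_add m hu₀ hu₁]
    rcases blockShape_cases (d m) u with h | ⟨hb, h⟩ | ⟨hu, h⟩ <;> rw [h]
    · exact Or.inr (Or.inl ⟨m, by ring⟩)
    · exact Or.inr (Or.inr ⟨m, hb, rfl⟩)
    · exact Or.inl ⟨m + 1, by linarith,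
        (Ico_subset_Ico_left (by linarith)).trans (Ico_subset_range_codedMap m)⟩

def node (d : ℕ → Bool) (n : ℕ) : range (codedMap d) := ⟨n, natCast_mem_range_codedMap n⟩

theorem node_strictMono : StrictMono (node d) := fun m n h => by
  simpa [node] using h

theorem node_covBy_add_half {n : ℕ} (h : d n = true) :
    node d n ⋖ ⟨n + 1 / 2, natCast_add_half_mem_range_codedMap h⟩ :=
  Subtype.covBy_of_forall_le (by simp [node]) fun z hz h₁ => by
    by_contra! h₂
    linarith [(eq_add_half_of_mem_range_codedMap hz h₁ (by linarith)).2]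

theorem add_half_covBy_add_three_quarters {n : ℕ} (h : d n = true) :
    (⟨n + 1 / 2, natCast_add_half_mem_range_codedMap h⟩ : range (codedMap d)) ⋖
      ⟨n + 3 / 4, natCast_add_three_quarters_mem_range_codedMap n⟩ :=
  Subtype.covBy_of_forall_le (by simp; norm_num) fun z hz h₁ => by
    by_contra! h₂
    linarith [(eq_add_half_of_mem_range_codedMap hz (by linarith) h₂).2]

theorem node_covBy_add_three_quarters {n : ℕ} (h : d n = false) :
    node d n ⋖ ⟨n + 3 / 4, natCast_add_three_quarters_mem_range_codedMap n⟩ :=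
  Subtype.covBy_of_forall_le (by simp [node]) fun z hz h₁ => by
    by_contra! h₂
    simp [(eq_add_half_of_mem_range_codedMap hz h₁ h₂).1] at h

theorem isCoverChainStart_iff_mem_range_node {x : range (codedMap d)} :
    IsCoverChainStart x ↔ x ∈ range (node d) := by
  constructor
  · rintro ⟨⟨y, hxy⟩, hnopred⟩
    rcases mem_range_codedMap_cases x.2 with ⟨b, hxb, hb⟩ | ⟨n, hn⟩ | ⟨n, hdn, hn⟩
    · exact absurd hxy (Subtype.not_covBy_of_Ico_subset hxb hb y)
    · exact ⟨n, Subtype.ext hn.symm⟩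
    · obtain ⟨q, hq⟩ := x
      obtain rfl : q = n + 1 / 2 := hn
      exact absurd (node_covBy_add_half hdn) (hnopred _)
  · rintro ⟨n, rfl⟩
    refine ⟨?_, Subtype.not_covBy_of_Ioo_subset (a := n - 1 / 4) (by simp [node])
      (Ioo_subset_range_codedMap n)⟩
    cases hdn : d n
    · exact ⟨_, node_covBy_add_three_quarters hdn⟩
    · exact ⟨_, node_covBy_add_half hdn⟩

theorem hasTwoStepCoverChain_node_iff {n : ℕ} : HasTwoStepCoverChain (node d n) ↔ d n = true := by
  refine ⟨fun ⟨a, b, ha, hb⟩ => ?_, fun hdn =>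
    ⟨_, _, node_covBy_add_half hdn, add_half_covBy_add_three_quarters hdn⟩⟩
  by_contra hdn
  rw [ha.unique_right (node_covBy_add_three_quarters (Bool.not_eq_true _ ▸ hdn))] at hb
  exact Subtype.not_covBy_of_Ico_subset (b := (n : ℚ) + 1) (by norm_num) (Ico_subset_range_codedMap n) _ hb

end CodedMap

theorem isEmpty_orderIso_range_codedMap {d e : ℕ → Bool} (hde : d ≠ e) :
    IsEmpty (range (codedMap d) ≃o range (codedMap e)) := by
  refine ⟨fun φ => hde (funext fun n => ?_)⟩
  have hφ : φ (node d n) = node e n :=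
    φ.apply_eq_of_strictMono_of_range node_strictMono node_strictMono (fun x => by
      rw [← isCoverChainStart_iff_mem_range_node, ← isCoverChainStart_iff_mem_range_node,
        φ.isCoverChainStart_apply_iff]) n
  rw [Bool.eq_iff_iff, ← hasTwoStepCoverChain_node_iff, ← hasTwoStepCoverChain_node_iff, ← hφ,
    φ.hasTwoStepCoverChain_apply_iff]

theorem LRel.range_eq {f g : ℚ → ℚ} (h : LRel f g) : range f = range g := by
  obtain ⟨u, v, -, -, hg, hf⟩ := h
  exact subset_antisymm (by rw [hf]; exact range_comp_subset_range v g)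
    (by rw [hg]; exact range_comp_subset_range u f)

theorem RRel.nonempty_orderIso_range {f g : ℚ → ℚ} (h : RRel f g) :
    Nonempty (range f ≃o range g) := by
  obtain ⟨u, v, hu, -, hg, hf⟩ := h
  have hvu : LeftInvOn v u (range f) := by
    rintro _ ⟨z, rfl⟩
    simpa [hg] using (congrFun hf z).symm
  have hmono : StrictMonoOn u (range f) := (hu.monotoneOn _).strictMonoOn_of_injOn hvu.injOn
  exact ⟨(hmono.orderIso u _).trans (OrderIso.setCongr _ _ (by rw [hg, range_comp]))⟩

theorem DRel.nonempty_orderIso_range {f g : ℚ → ℚ} (h : DRel f g) :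
    Nonempty (range f ≃o range g) := by
  obtain ⟨k, -, hfk, hkg⟩ := h
  obtain ⟨φ⟩ := hkg.nonempty_orderIso_range
  exact ⟨(OrderIso.setCongr _ _ hfk.range_eq).trans φ⟩

noncomputable def ratCutDigits (t : ℝ) (n : ℕ) : Bool := decide ((((Denumerable.eqv ℚ).symm n : ℚ) : ℝ) < t)

theorem ratCutDigits_injective : Function.Injective ratCutDigits := by
  have key : ∀ {s t : ℝ}, s < t → ratCutDigits s ≠ ratCutDigits t := by
    intro s t hst h
    obtain ⟨q, hsq, hqt⟩ := exists_rat_btwn hst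
    have := congrFun h (Denumerable.eqv ℚ q)
    simp [ratCutDigits, hqt, not_lt.2 hsq.le] at this
  intro s t h
  by_contra hne
  rcases lt_or_gt_of_ne hne with hlt | hlt
  exacts [key hlt h, key hlt h.symm]

/-- there is a real-indexed family of non-regular
order-preserving maps `ℚ → ℚ` with pairwise non-order-isomorphic images; in
particular its members are pairwise non-𝒟-related, giving continuum many
non-regular 𝒟-classes in `End(ℚ,≤)`. -/
theorem stmt_14 :
    ∃ f : ℝ → (ℚ → ℚ),
      (∀ t : ℝ, Monotone (f t)) ∧
      (∀ t : ℝ, ¬ (∃ g : ℚ → ℚ, Monotone g ∧ (f t) ∘ g ∘ (f t) = f t)) ∧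
      (∀ s t : ℝ, s ≠ t →
        IsEmpty (↥(Set.range (f s)) ≃o ↥(Set.range (f t))) ∧
        ¬ DRel (f s) (f t)) := by
  refine ⟨fun t => codedMap (ratCutDigits t), fun t => codedMap_monotone _,
    fun t => codedMap_not_isRegularEnd _, fun s t hst => ?_⟩
  have hiso := isEmpty_orderIso_range_codedMap (ratCutDigits_injective.ne hst)
  exact ⟨hiso, fun hD => hiso.false hD.nonempty_orderIso_range.some⟩
end
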